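/- For independent X₁ ~ Beta(α₁, β₁) and X₂ ~ Beta(α₂, β₂) with positive integer parameters, P(X₁ > X₂) can be written as the double-factorial expression in Eq. (34): P(X₁ > X₂) = [(α₁+β₁−1)!(α₂+β₂−1)! / ((α₁−1)!(β₁−1)!(α₁+β₁+α₂+β₂−2)!)] · ∑_{j=α₂}^{α₂+β₂−1} (j+α₁−1)!(β₁+α₂+β₂−j−2)! / (j!(α₂+β₂−1−j)!). -/

import Mathlib

open MeasureTheory Real Finset

/-- The Beta function `B(a,b) = Γ(a)Γ(b)/Γ(a+b)` at natural-number arguments. -/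
noncomputable def betaFun (a b : ℕ) : ℝ :=
  Real.Gamma a * Real.Gamma b / Real.Gamma (a + b)

/-- Density of a Beta(a, b) random variable with positive integer parameters. -/
noncomputable def betaDensity (a b : ℕ) (x : ℝ) : ℝ :=
  x ^ (a - 1) * (1 - x) ^ (b - 1) / betaFun a b

/-!
For integer parameters the distribution function of Beta(c+1, d+1) is the binomial tail
`∑_{c < j ≤ n} B_{n,j}(x)` of Bernstein polynomials, `n = c + d + 1`: the derivatives of the
`B_{n,j}` telescope to `n B_{n-1,c}`, which is the density. Multiplying by the Beta(a+1, b+1)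
density turns `P(X₁ > X₂)` into a finite sum of Beta integrals
`∫₀¹ x^p (1-x)^q = p! q! / (p+q+1)!`, which are read off from the density integrating to one.
-/

open scoped Nat

open Polynomial in
theorem derivative_sum_Ioc_bernsteinPolynomial {R : Type*} [CommRing R] {k n : ℕ}
    (hkn : k ≤ n) :
    derivative (∑ j ∈ Ioc k n, bernsteinPolynomial R n j) =
      n * bernsteinPolynomial R (n - 1) k := by
  rw [← Finset.Ico_add_one_add_one_eq_Ioc, ← sum_Ico_add', derivative_sum]
  simp only [bernsteinPolynomial.derivative_succ, ← mul_sum]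
  simp only [← neg_sub (bernsteinPolynomial R (n - 1) (_ + 1)), sum_neg_distrib,
    sum_Ico_sub (fun j => bernsteinPolynomial R (n - 1) j) hkn]
  rcases n with - | n
  · simp
  · rw [bernsteinPolynomial.eq_zero_of_lt R (by omega : n + 1 - 1 < n + 1)]
    ring

theorem betaFun_add_one (a b : ℕ) :
    betaFun (a + 1) (b + 1) = a ! * b ! / (a + b + 1)! := by
  rw [betaFun, ← Real.Gamma_nat_eq_factorial, ← Real.Gamma_nat_eq_factorial,
    ← Real.Gamma_nat_eq_factorial]
  push_cast
  ring_nf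

theorem betaDensity_add_one (a b : ℕ) (x : ℝ) :
    betaDensity (a + 1) (b + 1) x = (a + b + 1)! / (a ! * b !) * (x ^ a * (1 - x) ^ b) := by
  rw [betaDensity, betaFun_add_one, Nat.add_sub_cancel, Nat.add_sub_cancel]
  field_simp

theorem betaDensity_add_one_eq_bernsteinPolynomial (a b : ℕ) (x : ℝ) :
    betaDensity (a + 1) (b + 1) x = (a + b + 1) * (bernsteinPolynomial ℝ (a + b) a).eval x := by
  have hcoeff : ((a + b + 1)! / (a ! * b !) : ℝ) = (a + b + 1) * (a + b).choose a := by
    rw [Nat.cast_choose ℝ (Nat.le_add_right a b), Nat.add_sub_cancel_left, Nat.factorial_succ]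
    push_cast
    field_simp
  simp [betaDensity_add_one, bernsteinPolynomial, hcoeff, mul_assoc]

@[fun_prop]
theorem continuous_betaDensity (a b : ℕ) : Continuous (betaDensity a b) := by
  unfold betaDensity
  fun_prop

open Polynomial in
theorem integral_betaDensity_add_one (a b : ℕ) (x : ℝ) :
    ∫ y in (0:ℝ)..x, betaDensity (a + 1) (b + 1) y =
      ∑ j ∈ Ioc a (a + b + 1), (bernsteinPolynomial ℝ (a + b + 1) j).eval x := by
  set P := ∑ j ∈ Ioc a (a + b + 1), bernsteinPolynomial ℝ (a + b + 1) j
  have hP : ∀ y, HasDerivAt (fun y => P.eval y) (betaDensity (a + 1) (b + 1) y) y := by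
    intro y
    refine (P.hasDerivAt y).congr_deriv ?_
    rw [derivative_sum_Ioc_bernsteinPolynomial (by omega),
      betaDensity_add_one_eq_bernsteinPolynomial]
    simp
  have hP0 : P.eval 0 = 0 := by
    simp [P, eval_finsetSum, bernsteinPolynomial.eval_at_0]
  rw [intervalIntegral.integral_eq_sub_of_hasDerivAt (fun y _ => hP y)
    ((continuous_betaDensity _ _).intervalIntegrable 0 x), hP0, sub_zero, eval_finsetSum]

theorem integral_betaDensity_add_one_eq_one (a b : ℕ) :
    ∫ x in (0:ℝ)..1, betaDensity (a + 1) (b + 1) x = 1 := by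
  simp [integral_betaDensity_add_one, bernsteinPolynomial.eval_at_1]

theorem integral_pow_mul_one_sub_pow (p q : ℕ) :
    ∫ x in (0:ℝ)..1, x ^ p * (1 - x) ^ q = p ! * q ! / (p + q + 1)! := by
  have h := integral_betaDensity_add_one_eq_one p q
  simp only [betaDensity_add_one, intervalIntegral.integral_const_mul] at h
  field_simp at h ⊢
  linarith

open Polynomial in
theorem integral_betaDensity_mul_bernsteinPolynomial (a b : ℕ) {n j : ℕ} (hj : j ≤ n) :
    ∫ x in (0:ℝ)..1, betaDensity (a + 1) (b + 1) x * (bernsteinPolynomial ℝ n j).eval x =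
      (a + b + 1)! * n ! * (a + j)! * (b + (n - j))! /
        (a ! * b ! * j ! * (n - j)! * (a + b + n + 1)!) := by
  have hintegrand : ∀ x : ℝ,
      betaDensity (a + 1) (b + 1) x * (bernsteinPolynomial ℝ n j).eval x =
        ((a + b + 1)! / (a ! * b !) * n.choose j) * (x ^ (a + j) * (1 - x) ^ (b + (n - j))) := by
    intro x
    simp only [betaDensity_add_one, bernsteinPolynomial, eval_mul, eval_pow, eval_natCast,
      eval_X, eval_sub, eval_one]
    ring
  simp only [hintegrand, intervalIntegral.integral_const_mul, integral_pow_mul_one_sub_pow,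
    Nat.cast_choose ℝ hj]
  rw [show a + j + (b + (n - j)) + 1 = a + b + n + 1 by omega]
  field_simp

/-- Closed form (Eq. (34) of the paper) for `P(X₁ > X₂)` for independent Beta
random variables with positive integer parameters. -/
theorem prob_beta_gt_beta_factorial_form (α₁ β₁ α₂ β₂ : ℕ)
    (hα₁ : 0 < α₁) (hβ₁ : 0 < β₁) (hα₂ : 0 < α₂) (hβ₂ : 0 < β₂) :
    (∫ x in (0:ℝ)..1, betaDensity α₁ β₁ x * ∫ y in (0:ℝ)..x, betaDensity α₂ β₂ y)
      = ((Nat.factorial (α₁ + β₁ - 1) : ℝ) * (Nat.factorial (α₂ + β₂ - 1) : ℝ) /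
          ((Nat.factorial (α₁ - 1) : ℝ) * (Nat.factorial (β₁ - 1) : ℝ) *
            (Nat.factorial (α₁ + β₁ + α₂ + β₂ - 2) : ℝ))) *
        ∑ j ∈ Finset.Icc α₂ (α₂ + β₂ - 1),
          (Nat.factorial (j + α₁ - 1) : ℝ) *
              (Nat.factorial (β₁ + α₂ + β₂ - j - 2) : ℝ) /
            ((Nat.factorial j : ℝ) * (Nat.factorial (α₂ + β₂ - 1 - j) : ℝ)) := by
  obtain ⟨a, rfl⟩ : ∃ a, α₁ = a + 1 := ⟨α₁ - 1, by omega⟩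
  obtain ⟨b, rfl⟩ : ∃ b, β₁ = b + 1 := ⟨β₁ - 1, by omega⟩
  obtain ⟨c, rfl⟩ : ∃ c, α₂ = c + 1 := ⟨α₂ - 1, by omega⟩
  obtain ⟨d, rfl⟩ : ∃ d, β₂ = d + 1 := ⟨β₂ - 1, by omega⟩
  simp_rw [integral_betaDensity_add_one c d, mul_sum]
  rw [intervalIntegral.integral_finsetSum fun j _ =>
      Continuous.intervalIntegrable (by fun_prop) 0 1,
    show c + 1 + (d + 1) - 1 = c + d + 1 by omega, Finset.Icc_add_one_left_eq_Ioc]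
  refine sum_congr rfl fun j hj => ?_
  have hjn : j ≤ c + d + 1 := (mem_Ioc.mp hj).2
  rw [integral_betaDensity_mul_bernsteinPolynomial a b hjn,
    show a + 1 + (b + 1) - 1 = a + b + 1 by omega,
    show a + 1 + (b + 1) + (c + 1) + (d + 1) - 2 = a + b + (c + d + 1) + 1 by omega,
    show j + (a + 1) - 1 = a + j by omega,
    show b + 1 + (c + 1) + (d + 1) - j - 2 = b + (c + d + 1 - j) by omega,
    Nat.add_sub_cancel, Nat.add_sub_cancel]
  field_simp
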